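/- Let K = ℚ(√2) and let A = (−1, −√2) be the quaternion algebra over K with i² = −1, j² = −√2, ij = −ji. Then every ℚ-algebra automorphism of A is inner, i.e., for every ring automorphism f of A fixing ℚ pointwise there exists a unit u ∈ A with f(x) = u x u⁻¹ for all x ∈ A. (Equivalently, the outer automorphism group Out_ℚ(A) is trivial.) -/

import Mathlib

/-!
Skolem–Noether for quaternion algebras, made explicit: in a quaternion division algebra two
standard bases `(i, j)`, `(I, J)` with the same structure constants are conjugate. If `I ≠ -i`,
the unit `i + I` conjugates `i` to `I`, since `(i + I) i = i² + I i = I² + I i = I (i + I)`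
(and `j` does it when `I = -i`). Conjugating the second basis back, we may assume `I = i`; then
`(j + J) j` conjugates `j` to `J` and commutes with `i`, because `i` anticommutes with both `j`
and `J` (and `i` does it when `J = -j`).

So it suffices to see that a `ℚ`-automorphism `f` of `(-1, -√2)` is `K`-linear. It preserves the
centre `K`, hence sends `√2` to a square root of `2` in `K`. If `f √2 = -√2`, then `J = f j`
satisfies `J² = √2` and anticommutes with the unit `f i`; the trace is invariant under
conjugation, so `J` is a pure quaternion, and then `J² = -(a² + √2 b² + √2 c²) ≤ 0`.
-/

open scoped Quaternion
open IntermediateField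

noncomputable section

/-- `K = ℚ(√2)`, the subfield of `ℝ` generated over `ℚ` by `√2`. -/
abbrev Ksqrt2 : IntermediateField ℚ ℝ := ℚ⟮Real.sqrt 2⟯

/-- `√2` as an element of `K = ℚ(√2)`. -/
def sqrt2 : Ksqrt2 := ⟨Real.sqrt 2, IntermediateField.mem_adjoin_simple_self ℚ (Real.sqrt 2)⟩

theorem add_mul_eq_mul_add_of_mul_self_eq {D : Type*} [Ring D] {x y : D} (h : x * x = y * y) :
    (x + y) * x = y * (x + y) := by
  rw [add_mul, mul_add, h, add_comm]

namespace QuaternionAlgebra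

section CommRing

variable {R : Type*} [CommRing R] {c₁ c₃ : R}

theorem re_mul_comm (a b : ℍ[R,c₁,c₃]) : (a * b).re = (b * a).re := by
  simp only [re_mul]; ring

theorem mul_self_eq_neg_of_re_eq_zero {x : ℍ[R,c₁,c₃]} (hx : x.re = 0) :
    x * x = -((x * star x).re : ℍ[R,c₁,c₃]) := by
  have hstar : star x = -x := by ext <;> simp [hx]
  rw [← mul_star_eq_coe, hstar, mul_neg, neg_neg]

variable [NoZeroDivisors R] [CharZero R]

theorem eq_re_of_forall_commute (hc₁ : c₁ ≠ 0) {x : ℍ[R,c₁,c₃]} (hx : ∀ y, Commute y x) :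
    x = x.re := by
  have hi := hx ⟨0, 1, 0, 0⟩
  have hj := hx ⟨0, 0, 1, 0⟩
  rw [commute_iff_eq, QuaternionAlgebra.ext_iff] at hi hj
  simp [CharZero.eq_neg_self_iff, CharZero.neg_eq_self_iff, hc₁] at hi hj
  ext <;> simp [hi, hj]

theorem map_coe_eq_coe_re (hc₁ : c₁ ≠ 0) (f : ℍ[R,c₁,c₃] ≃* ℍ[R,c₁,c₃]) (z : R) :
    f z = (f z).re :=
  eq_re_of_forall_commute hc₁ fun y => (commute_iff_eq _ _).2 <| by
    simpa using congrArg f (coe_commutes z (f.symm y)).symm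

theorem re_eq_zero_of_mul_eq_neg_mul {x y : ℍ[R,c₁,c₃]} (hy : IsUnit y)
    (h : x * y = -(y * x)) : x.re = 0 := by
  obtain ⟨u, rfl⟩ := hy
  refine CharZero.eq_neg_self_iff.1 ?_
  calc x.re = (↑u⁻¹ * (x * u)).re := by rw [← re_mul_comm, mul_assoc, Units.mul_inv, mul_one]
    _ = -x.re := by rw [h, mul_neg, Units.inv_mul_cancel_left, re_neg]

end CommRing

theorem isUnit_of_re_mul_star_ne_zero {R : Type*} [Field R] {c₁ c₂ c₃ : R}
    {x : ℍ[R,c₁,c₂,c₃]} (h : (x * star x).re ≠ 0) : IsUnit x :=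
  isUnit_iff_exists.2 ⟨(x * star x).re⁻¹ • star x, by
    rw [mul_smul_comm, smul_mul_assoc, star_comm_self', mul_star_eq_coe, re_coe, smul_coe,
      inv_mul_cancel₀ h, coe_one]
    exact ⟨rfl, rfl⟩⟩

namespace Basis

variable {K D : Type*} [Field K] [Ring D] [Algebra K D] {c₁ c₃ : K}

theorem j_mul_i_eq_neg (q : Basis D c₁ 0 c₃) : q.j * q.i = -(q.i * q.j) := by
  rw [q.j_mul_i, q.i_mul_j, zero_smul, zero_sub]

theorem isUnit_i (q : Basis D c₁ 0 c₃) (hc₁ : c₁ ≠ 0) : IsUnit q.i :=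
  isUnit_iff_exists.2 ⟨c₁⁻¹ • q.i, by simp [q.i_mul_i, smul_smul, hc₁]⟩

theorem isUnit_j (q : Basis D c₁ 0 c₃) (hc₃ : c₃ ≠ 0) : IsUnit q.j :=
  isUnit_iff_exists.2 ⟨c₃⁻¹ • q.j, by simp [q.j_mul_j, smul_smul, hc₃]⟩

theorem exists_unit_mul_i_eq (hD : ∀ a : D, a ≠ 0 → IsUnit a) (hc₃ : c₃ ≠ 0)
    (p q : Basis D c₁ 0 c₃) : ∃ u : Dˣ, ↑u * p.i = q.i * ↑u := by
  by_cases h : p.i + q.i = 0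
  · refine ⟨(p.isUnit_j hc₃).unit, ?_⟩
    rw [IsUnit.unit_spec, eq_neg_of_add_eq_zero_right h, p.j_mul_i_eq_neg, neg_mul]
  · refine ⟨(hD _ h).unit, add_mul_eq_mul_add_of_mul_self_eq ?_⟩
    rw [p.i_mul_i, q.i_mul_i, zero_smul, zero_smul]

theorem exists_unit_commute_i_mul_j_eq (hD : ∀ a : D, a ≠ 0 → IsUnit a) (hc₁ : c₁ ≠ 0)
    (hc₃ : c₃ ≠ 0) (p q : Basis D c₁ 0 c₃) (hi : p.i = q.i) :
    ∃ v : Dˣ, ↑v * p.i = p.i * ↑v ∧ ↑v * p.j = q.j * ↑v := by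
  by_cases h : p.j + q.j = 0
  · refine ⟨(p.isUnit_i hc₁).unit, rfl, ?_⟩
    rw [IsUnit.unit_spec, eq_neg_of_add_eq_zero_right h, neg_mul, p.j_mul_i_eq_neg, neg_neg]
  · have hanti : (p.j + q.j) * p.i = -(p.i * (p.j + q.j)) := by
      rw [add_mul, mul_add, neg_add, p.j_mul_i_eq_neg, hi, q.j_mul_i_eq_neg]
    refine ⟨((hD _ h).mul (p.isUnit_j hc₃)).unit, ?_, ?_⟩
    · calc (p.j + q.j) * p.j * p.i = -((p.j + q.j) * p.i * p.j) := by
            rw [mul_assoc, p.j_mul_i_eq_neg, mul_neg, mul_assoc]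
        _ = p.i * ((p.j + q.j) * p.j) := by rw [hanti, neg_mul, neg_neg, mul_assoc]
    · rw [IsUnit.unit_spec, ← mul_assoc q.j,
        ← add_mul_eq_mul_add_of_mul_self_eq (by rw [p.j_mul_j, q.j_mul_j])]

theorem exists_unit_conj (hD : ∀ a : D, a ≠ 0 → IsUnit a) (hc₁ : c₁ ≠ 0) (hc₃ : c₃ ≠ 0)
    (p q : Basis D c₁ 0 c₃) : ∃ u : Dˣ, ↑u * p.i = q.i * ↑u ∧ ↑u * p.j = q.j * ↑u := by
  obtain ⟨u, hu⟩ := exists_unit_mul_i_eq hD hc₃ p q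
  let q' := q.compHom (MulSemiringAction.toAlgHom K D (ConjAct.toConjAct u⁻¹))
  have hq'i : p.i = q'.i := by
    simp [q', ConjAct.units_smul_def, mul_assoc, ← hu]
  obtain ⟨v, hvi, hvj⟩ := exists_unit_commute_i_mul_j_eq hD hc₁ hc₃ p q' hq'i
  refine ⟨u * v, ?_, ?_⟩
  · rw [Units.val_mul, mul_assoc, hvi, ← mul_assoc, hu, mul_assoc]
  · rw [Units.val_mul, mul_assoc, hvj]
    simp [q', ConjAct.units_smul_def, mul_assoc]

end Basis

end QuaternionAlgebra

open QuaternionAlgebra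

theorem sqrt2_pos : 0 < sqrt2 := by
  rw [← Subtype.coe_lt_coe]; exact Real.sqrt_pos.2 two_pos

theorem sqrt2_mul_self : sqrt2 * sqrt2 = 2 := by
  ext; exact Real.mul_self_sqrt zero_le_two

theorem re_mul_star_eq (x : ℍ[Ksqrt2, -1, -sqrt2]) :
    (x * star x).re = x.re ^ 2 + x.imI ^ 2 + sqrt2 * (x.imJ ^ 2 + x.imK ^ 2) := by
  simp only [re_mul, re_star, imI_star, imJ_star, imK_star]; ring

theorem re_mul_star_nonneg (x : ℍ[Ksqrt2, -1, -sqrt2]) : 0 ≤ (x * star x).re := by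
  have := sqrt2_pos
  rw [re_mul_star_eq]; positivity

theorem re_mul_star_pos {x : ℍ[Ksqrt2, -1, -sqrt2]} (hx : x ≠ 0) : 0 < (x * star x).re := by
  have h : x.re ≠ 0 ∨ x.imI ≠ 0 ∨ x.imJ ≠ 0 ∨ x.imK ≠ 0 := by
    contrapose! hx; ext <;> simp [hx]
  have := sqrt2_pos
  rw [re_mul_star_eq]
  rcases h with h | h | h | h <;> positivity

theorem isUnit_of_ne_zero {x : ℍ[Ksqrt2, -1, -sqrt2]} (hx : x ≠ 0) : IsUnit x :=
  isUnit_of_re_mul_star_ne_zero (re_mul_star_pos hx).ne'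

theorem mul_self_ne_sqrt2_of_mul_eq_neg_mul {x y : ℍ[Ksqrt2, -1, -sqrt2]} (hy : IsUnit y)
    (h : x * y = -(y * x)) : x * x ≠ (sqrt2 : ℍ[Ksqrt2, -1, -sqrt2]) := by
  intro hx
  have hneg : -(x * star x).re = sqrt2 := coe_injective <| by
    rw [coe_neg, ← mul_self_eq_neg_of_re_eq_zero (re_eq_zero_of_mul_eq_neg_mul hy h), hx]
  linarith [re_mul_star_nonneg x, sqrt2_pos]

theorem map_algebraMap_sqrt2 (f : ℍ[Ksqrt2, -1, -sqrt2] ≃ₐ[ℚ] ℍ[Ksqrt2, -1, -sqrt2]) :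
    f (algebraMap Ksqrt2 _ sqrt2) = algebraMap Ksqrt2 _ sqrt2 := by
  set w := (f sqrt2).re
  have hw : f (algebraMap Ksqrt2 _ sqrt2) = w := map_coe_eq_coe_re (by norm_num) f.toMulEquiv sqrt2
  have hw2 : w * w = sqrt2 * sqrt2 := by
    apply coe_injective (c₁ := (-1 : Ksqrt2)) (c₂ := 0) (c₃ := -sqrt2)
    rw [coe_mul, ← hw, ← map_mul, ← map_mul, sqrt2_mul_self, map_ofNat, map_ofNat, coe_ofNat]
  rcases mul_self_eq_mul_self_iff.1 hw2 with h | h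
  · rw [hw, h]; rfl
  let q : Basis ℍ[Ksqrt2, -1, -sqrt2] (-1) 0 (-sqrt2) := Basis.self Ksqrt2
  have hJ : f q.j * f q.j = (sqrt2 : ℍ[Ksqrt2, -1, -sqrt2]) := by
    rw [← map_mul, q.j_mul_j, neg_smul, ← Algebra.algebraMap_eq_smul_one, map_neg, hw, h,
      coe_neg, neg_neg]
  exact absurd hJ (mul_self_ne_sqrt2_of_mul_eq_neg_mul ((q.isUnit_i (by norm_num)).map f)
    (by rw [← map_mul, ← map_mul, q.j_mul_i_eq_neg, map_neg]))

theorem map_algebraMap (f : ℍ[Ksqrt2, -1, -sqrt2] ≃ₐ[ℚ] ℍ[Ksqrt2, -1, -sqrt2]) (z : Ksqrt2) :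
    f (algebraMap Ksqrt2 _ z) = algebraMap Ksqrt2 _ z := by
  let ι := IsScalarTower.toAlgHom ℚ Ksqrt2 ℍ[Ksqrt2, -1, -sqrt2]
  have h : (f : ℍ[Ksqrt2, -1, -sqrt2] →ₐ[ℚ] ℍ[Ksqrt2, -1, -sqrt2]).comp ι = ι :=
    adjoin_algHom_ext ℚ fun x hx => by
      subst hx
      exact map_algebraMap_sqrt2 f
  exact DFunLike.congr_fun h z

/-- Every `ℚ`-algebra automorphism of the quaternion algebra
`A = (−1, −√2)` over `K = ℚ(√2)` is inner: for every ring automorphism `f` of `A` fixing `ℚ`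
pointwise there is a unit `u` of `A` with `f x = u * x * u⁻¹` for all `x`. -/
theorem stmt_7 (f : ℍ[Ksqrt2, -1, -sqrt2] ≃ₐ[ℚ] ℍ[Ksqrt2, -1, -sqrt2]) :
    ∃ u : (ℍ[Ksqrt2, -1, -sqrt2])ˣ, ∀ x, f x = ↑u * x * ↑u⁻¹ := by
  let fK : ℍ[Ksqrt2, -1, -sqrt2] →ₐ[Ksqrt2] ℍ[Ksqrt2, -1, -sqrt2] :=
    { (f : ℍ[Ksqrt2, -1, -sqrt2] →+* ℍ[Ksqrt2, -1, -sqrt2]) with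
      commutes' := map_algebraMap f }
  let p : Basis ℍ[Ksqrt2, -1, -sqrt2] (-1) 0 (-sqrt2) := Basis.self Ksqrt2
  obtain ⟨u, hi, hj⟩ := p.exists_unit_conj (fun _ => isUnit_of_ne_zero) (by norm_num)
    (neg_ne_zero.2 sqrt2_pos.ne') (p.compHom fK)
  have h : fK = MulSemiringAction.toAlgHom Ksqrt2 _ (ConjAct.toConjAct u) :=
    hom_ext ((Units.eq_mul_inv_iff_mul_eq u).2 hi.symm) ((Units.eq_mul_inv_iff_mul_eq u).2 hj.symm)
  exact ⟨u, DFunLike.congr_fun h⟩
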